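/- arXiv:2403.14862 — 3 statements merged into one kernel-verified Lean document; each statement's English description precedes it below -/
import Mathlib

section
/- For nonnegative sorted weights h_1 ≥ ... ≥ h_m ≥ 0 and any vector δ ∈ ℝ^n with n ≥ m, the maximum of Σ_i Σ_j h_i δ_j X_{ij} over doubly substochastic matrices X ∈ [0,1]^{m×n} (row sums ≤ 1, column sums ≤ 1) equals Σ_{i=1}^m h_i max(δ_{(i)}, 0)... in the case all δ_j ≥ 0, it equals Σ_{i=1}^m h_i δ_{(i)}, where δ_{(1)} ≥ ... ≥ δ_{(n)} is the descending rearrangement of δ. In particular, the LP relaxation over fractional X attains its optimum at an integral (permutation-type) matrix. -/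
/-!
Put `a_i = ∑_j δ_j X_ij`. Since `h` is antitone and nonnegative, summation by parts reduces
`∑ h_i a_i ≤ ∑ h_i δ_(i)` to the same inequality for the partial sums over the first `k` rows.
Such a partial sum is `∑_j δ_j Z_j` with `Z_j = ∑_{i<k} X_ij ∈ [0,1]` of total mass at most `k`,
and a fractional selection of this kind cannot beat the `k` largest entries of `δ`: with `S` the
top `k` columns and `t = max_{j ∉ S} δ_j`, each term satisfies
`δ_j Z_j ≤ t Z_j + [j ∈ S] (δ_j - t)`.
-/

def feasF {m n : ℕ} (X : Matrix (Fin m) (Fin n) ℝ) : Prop :=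
  (∀ i j, X i j ∈ Set.Icc (0:ℝ) 1) ∧ (∀ i, ∑ j, X i j ≤ 1) ∧ (∀ j, ∑ i, X i j ≤ 1)

open Finset

theorem Fin.sum_mul_nonpos_of_partial_sums_nonpos :
    ∀ {N : ℕ} {w g : Fin N → ℝ}, Antitone w → (∀ i, 0 ≤ w i) →
      (∀ k ≤ N, ∑ i : Fin N with i.val < k, g i ≤ 0) → ∑ i, w i * g i ≤ 0
  | 0, _, _, _, _, _ => by simp
  | N + 1, w, g, hw, hw0, hg => by
    have hlast : ∑ i, w i * g i = ∑ i : Fin N, (w i.castSucc - w (last N)) * g i.castSucc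
        + w (last N) * ∑ i, g i := by
      simp only [Fin.sum_univ_castSucc, sub_mul, sum_sub_distrib, mul_add, mul_sum]
      ring
    have hrest : ∑ i : Fin N, (w i.castSucc - w (last N)) * g i.castSucc ≤ 0 := by
      refine sum_mul_nonpos_of_partial_sums_nonpos (fun i j hij => ?_) (fun i => ?_) fun k hk => ?_
      · exact sub_le_sub_right (hw (castSucc_le_castSucc_iff.mpr hij)) _
      · exact sub_nonneg.mpr (hw (le_last _))
      · have := hg k (by omega)
        simpa only [sum_filter, Fin.sum_univ_castSucc, val_castSucc, val_last,
          if_neg (Nat.not_lt.mpr hk), add_zero] using this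
    have htotal : ∑ i, g i ≤ 0 := by
      simpa only [filter_true_of_mem fun (i : Fin (N + 1)) _ => i.is_lt] using hg (N + 1) le_rfl
    rw [hlast]
    exact add_nonpos hrest (mul_nonpos_of_nonneg_of_nonpos (hw0 _) htotal)

theorem Fin.sum_mul_le_sum_mul_of_partial_sums_le {N : ℕ} {w a b : Fin N → ℝ} (hw : Antitone w)
    (hw0 : ∀ i, 0 ≤ w i)
    (hab : ∀ k ≤ N, ∑ i : Fin N with i.val < k, a i ≤ ∑ i : Fin N with i.val < k, b i) :
    ∑ i, w i * a i ≤ ∑ i, w i * b i := by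
  have := sum_mul_nonpos_of_partial_sums_nonpos (g := a - b) hw hw0 fun k hk => by
    simpa only [Pi.sub_apply, sum_sub_distrib, sub_nonpos] using hab k hk
  simpa only [Pi.sub_apply, mul_sub, sum_sub_distrib, sub_nonpos] using this

theorem sum_mul_le_sum_of_forall_compl_le {ι : Type*} [Fintype ι] [DecidableEq ι]
    {d Z : ι → ℝ} {S : Finset ι} (hd : ∀ j, 0 ≤ d j) (hS : ∀ j ∈ S, ∀ j' ∉ S, d j' ≤ d j)
    (hZ0 : ∀ j, 0 ≤ Z j) (hZ1 : ∀ j, Z j ≤ 1) (hZS : ∑ j, Z j ≤ #S) :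
    ∑ j, d j * Z j ≤ ∑ j ∈ S, d j := by
  obtain ⟨t, ht0, htS, htSc⟩ : ∃ t, 0 ≤ t ∧ (∀ j ∈ S, t ≤ d j) ∧ ∀ j ∉ S, d j ≤ t := by
    by_cases hc : Sᶜ.Nonempty
    · obtain ⟨j', hj'⟩ := hc
      refine ⟨Sᶜ.sup' ⟨j', hj'⟩ d, (hd j').trans (le_sup' d hj'), fun j hj => ?_,
        fun j hj => le_sup' d (mem_compl.mpr hj)⟩
      exact sup'_le _ _ fun j' hj' => hS j hj j' (mem_compl.mp hj')
    · exact ⟨0, le_rfl, fun j _ => hd j, fun j hj => absurd ⟨j, mem_compl.mpr hj⟩ hc⟩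
  have hpoint (j : ι) : d j * Z j ≤ t * Z j + if j ∈ S then d j - t else 0 := by
    split_ifs with hj
    · nlinarith [mul_nonneg (sub_nonneg.2 (htS j hj)) (sub_nonneg.2 (hZ1 j))]
    · nlinarith [mul_nonneg (sub_nonneg.2 (htSc j hj)) (hZ0 j)]
  calc ∑ j, d j * Z j ≤ t * ∑ j, Z j + ∑ j ∈ S, (d j - t) :=
        (sum_le_sum fun j _ => hpoint j).trans_eq (by
          rw [sum_add_distrib, mul_sum, sum_ite_mem, univ_inter])
    _ ≤ t * #S + ∑ j ∈ S, (d j - t) := by gcongr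
    _ = ∑ j ∈ S, d j := by simp only [sum_sub_distrib, sum_const, nsmul_eq_mul]; ring

theorem feasF_of_injective {m n : ℕ} {f : Fin m → Fin n} (hf : Function.Injective f) :
    feasF (fun i j => if j = f i then 1 else 0) := by
  refine ⟨fun i j => ?_, fun i => ?_, fun j => ?_⟩
  · dsimp only
    split_ifs <;> norm_num
  · simp
  · dsimp only
    rw [sum_boole, Nat.cast_le_one, card_le_one_iff]
    intro a b ha hb
    exact hf ((mem_filter.mp ha).2.symm.trans (mem_filter.mp hb).2)

theorem sum_sum_mul_le_of_feasF {m n : ℕ} (hmn : m ≤ n) {h : Fin m → ℝ} {δ : Fin n → ℝ}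
    (hh : Antitone h) (hh0 : ∀ i, 0 ≤ h i) (hδ0 : ∀ j, 0 ≤ δ j) {σ : Equiv.Perm (Fin n)}
    (hσ : Antitone fun j => δ (σ j)) {X : Matrix (Fin m) (Fin n) ℝ} (hX : feasF X) :
    ∑ i, ∑ j, h i * δ j * X i j ≤ ∑ i, h i * δ (σ (Fin.castLE hmn i)) := by
  obtain ⟨hbox, hrow, hcol⟩ := hX
  have hrows (k : ℕ) : ∑ i : Fin m with i.val < k, ∑ j, δ j * X i j
      ≤ ∑ i : Fin m with i.val < k, δ (σ (Fin.castLE hmn i)) := by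
    set R := univ.filter fun i : Fin m => i.val < k
    -- `e i` is the column holding the `i`-th largest entry of `δ`
    set e : Fin m ↪ Fin n := (Fin.castLEEmb hmn).trans σ.toEmbedding
    have htop : ∀ j ∈ R.map e, ∀ j' ∉ R.map e, δ j' ≤ δ j := by
      simp only [R, e, mem_map, mem_filter, mem_univ, true_and, not_exists, not_and,
        Function.Embedding.trans_apply, Fin.castLEEmb_apply, Equiv.toEmbedding_apply]
      rintro _ ⟨i, hik, rfl⟩ j' hj'
      obtain ⟨l, rfl⟩ := σ.surjective j'
      refine hσ (not_lt.mp fun hl => ?_)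
      have hli : l.val < i.val := hl
      exact hj' ⟨l.val, by omega⟩ (show l.val < k by omega) rfl
    have hmass : ∑ j, ∑ i ∈ R, X i j ≤ #(R.map e) := by
      rw [sum_comm, card_map, card_eq_sum_ones, Nat.cast_sum, Nat.cast_one]
      exact sum_le_sum fun i _ => hrow i
    calc ∑ i ∈ R, ∑ j, δ j * X i j = ∑ j, δ j * ∑ i ∈ R, X i j := by
          rw [sum_comm]; simp_rw [mul_sum]
      _ ≤ ∑ j ∈ R.map e, δ j := sum_mul_le_sum_of_forall_compl_le hδ0 htop
          (fun j => sum_nonneg fun i _ => (hbox i j).1)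
          (fun j => (sum_le_univ_sum_of_nonneg fun i => (hbox i j).1).trans (hcol j)) hmass
      _ = ∑ i ∈ R, δ (σ (Fin.castLE hmn i)) := sum_map _ _ _
  calc ∑ i, ∑ j, h i * δ j * X i j = ∑ i, h i * ∑ j, δ j * X i j := by
        simp_rw [mul_sum, mul_assoc]
    _ ≤ _ := Fin.sum_mul_le_sum_mul_of_partial_sums_le hh hh0 fun k _ => hrows k

theorem stmt1_general {m n : ℕ} (hmn : m ≤ n)
    (h : Fin m → ℝ) (δ : Fin n → ℝ)
    (hdesc : Antitone h) (hnonneg : ∀ i, 0 ≤ h i) (δnonneg : ∀ j, 0 ≤ δ j)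
    (σ : Equiv.Perm (Fin n)) (hσ : Antitone fun j => δ (σ j))
    (Xstar : Matrix (Fin m) (Fin n) ℝ)
    (hX : Xstar = fun i j => if j = σ (Fin.castLE hmn i) then 1 else 0) :
    feasF Xstar ∧
      (∀ i j, Xstar i j = 0 ∨ Xstar i j = 1) ∧
      (∑ i, ∑ j, h i * δ j * Xstar i j = ∑ i : Fin m, h i * δ (σ (Fin.castLE hmn i))) ∧
      ∀ X, feasF X →
        ∑ i, ∑ j, h i * δ j * X i j ≤ ∑ i : Fin m, h i * δ (σ (Fin.castLE hmn i)) := by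
  subst hX
  have hinj : Function.Injective fun i => σ (Fin.castLE hmn i) :=
    σ.injective.comp (Fin.castLE_injective hmn)
  refine ⟨feasF_of_injective hinj, fun i j => ?_, ?_,
    fun X hX => sum_sum_mul_le_of_feasF hmn hdesc hnonneg δnonneg hσ hX⟩
  · dsimp only
    split_ifs <;> simp
  · simp [mul_ite, sum_ite_eq']

/-- The LP relaxation over doubly substochastic matrices of the rank-one
objective `h i * δ j` has optimum `∑_{i<m} h i * δ_(i)` (descending
rearrangement of `δ`, all `δ_j ≥ 0`), attained at an integral matrix. -/
theorem stmt1 {m n : ℕ} (hm : 0 < m) (hmn : m ≤ n)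
    (h : Fin m → ℝ) (δ : Fin n → ℝ)
    (hdesc : Antitone h) (hnonneg : ∀ i, 0 ≤ h i) (δnonneg : ∀ j, 0 ≤ δ j)
    (σ : Equiv.Perm (Fin n)) (hσ : Antitone fun j => δ (σ j))
    (Xstar : Matrix (Fin m) (Fin n) ℝ)
    (hX : Xstar = fun i j => if j = σ (Fin.castLE hmn i) then 1 else 0) :
    feasF Xstar ∧
      (∀ i j, Xstar i j = 0 ∨ Xstar i j = 1) ∧
      (∑ i, ∑ j, h i * δ j * Xstar i j = ∑ i : Fin m, h i * δ (σ (Fin.castLE hmn i))) ∧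
      ∀ X, feasF X →
        ∑ i, ∑ j, h i * δ j * X i j ≤ ∑ i : Fin m, h i * δ (σ (Fin.castLE hmn i)) :=
  stmt1_general hmn h δ hdesc hnonneg δnonneg σ hσ Xstar hX
end

section
/- Convex-combination optimality: suppose X₊ and X₋ both maximize the Lagrangian Σ_{ij} h_i (v_j + μ* r_j) X_{ij} over F at the same dual value μ* ≥ 0, with Rel(X₋) ≤ λa ≤ Rel(X₊). Let α = (Rel(X₊) − λa)/(Rel(X₊) − Rel(X₋)) if Rel(X₊) > Rel(X₋), else α = 0, and set X^LP = (1−α) X₊ + α X₋. Then X^LP is feasible for the LP relaxation P1, Rel(X^LP) = λa (when Rel(X₋) < λa < Rel(X₊)), and X^LP is an optimal solution of P1. -/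
lemma comb_sum {m n : ℕ} (f : Fin m → Fin n → ℝ) (α : ℝ)
    (A B : Matrix (Fin m) (Fin n) ℝ) :
    ∑ i, ∑ j, f i j * ((1 - α) • A + α • B) i j
      = (1 - α) * (∑ i, ∑ j, f i j * A i j) + α * (∑ i, ∑ j, f i j * B i j) := by
  rw [Finset.mul_sum, Finset.mul_sum, ← Finset.sum_add_distrib]
  refine Finset.sum_congr rfl fun i _ => ?_
  rw [Finset.mul_sum, Finset.mul_sum, ← Finset.sum_add_distrib]
  refine Finset.sum_congr rfl fun j _ => ?_
  simp [Matrix.add_apply, Matrix.smul_apply]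
  ring

lemma lag_split {m n : ℕ} (h : Fin m → ℝ) (v r : Fin n → ℝ) (μs : ℝ)
    (X : Matrix (Fin m) (Fin n) ℝ) :
    ∑ i, ∑ j, h i * (v j + μs * r j) * X i j
      = (∑ i, ∑ j, h i * v j * X i j) + μs * (∑ i, ∑ j, h i * r j * X i j) := by
  rw [Finset.mul_sum, ← Finset.sum_add_distrib]
  refine Finset.sum_congr rfl fun i _ => ?_
  rw [Finset.mul_sum, ← Finset.sum_add_distrib]
  refine Finset.sum_congr rfl fun j _ => ?_
  ring

/-- Convex-combination optimality: if `X₊` and `X₋` both maximize the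
Lagrangian at the same `μ* ≥ 0`, with `Rel(X₋) ≤ λa ≤ Rel(X₊)`, then the
convex combination `X^LP = (1−α) X₊ + α X₋` (with the stated `α`) is feasible
for `P1`, meets the relevance constraint with equality in the strict sandwich
case, and is optimal for `P1`. -/
theorem stmt17 {m n : ℕ} (hmn : m ≤ n)
    (h : Fin m → ℝ) (v r : Fin n → ℝ)
    (hnonneg : ∀ i, 0 ≤ h i) (hv : ∀ j, 0 ≤ v j) (hr : ∀ j, 0 ≤ r j)
    (lam a : ℝ) (μs : ℝ) (hμs : 0 ≤ μs)
    (Xp Xm : Matrix (Fin m) (Fin n) ℝ) (hXpF : feasF Xp) (hXmF : feasF Xm)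
    (hXpmax : ∀ X, feasF X →
      ∑ i, ∑ j, h i * (v j + μs * r j) * X i j ≤
        ∑ i, ∑ j, h i * (v j + μs * r j) * Xp i j)
    (hXmmax : ∀ X, feasF X →
      ∑ i, ∑ j, h i * (v j + μs * r j) * X i j ≤
        ∑ i, ∑ j, h i * (v j + μs * r j) * Xm i j)
    (hRelm : ∑ i, ∑ j, h i * r j * Xm i j ≤ lam * a)
    (hRelp : lam * a ≤ ∑ i, ∑ j, h i * r j * Xp i j)
    (α : ℝ)
    (hα : α = if (∑ i, ∑ j, h i * r j * Xm i j) < ∑ i, ∑ j, h i * r j * Xp i j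
      then ((∑ i, ∑ j, h i * r j * Xp i j) - lam * a) /
        ((∑ i, ∑ j, h i * r j * Xp i j) - ∑ i, ∑ j, h i * r j * Xm i j)
      else 0)
    (XLP : Matrix (Fin m) (Fin n) ℝ)
    (hXLP : XLP = (1 - α) • Xp + α • Xm) :
    feasF XLP ∧
    lam * a ≤ ∑ i, ∑ j, h i * r j * XLP i j ∧
    ((∑ i, ∑ j, h i * r j * Xm i j) < lam * a →
      lam * a < ∑ i, ∑ j, h i * r j * Xp i j →
      ∑ i, ∑ j, h i * r j * XLP i j = lam * a) ∧
    (∀ X, feasF X → lam * a ≤ ∑ i, ∑ j, h i * r j * X i j →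
      ∑ i, ∑ j, h i * v j * X i j ≤ ∑ i, ∑ j, h i * v j * XLP i j) := by
  set Rp := ∑ i, ∑ j, h i * r j * Xp i j with hRp
  set Rm := ∑ i, ∑ j, h i * r j * Xm i j with hRm
  have hα0 : 0 ≤ α := by
    rw [hα]; split_ifs with hlt
    · exact div_nonneg (by linarith) (by linarith)
    · exact le_refl 0
  have hα1 : α ≤ 1 := by
    rw [hα]; split_ifs with hlt
    · exact (div_le_one (by linarith)).mpr (by linarith)
    · norm_num
  -- relevance of XLP equals lam * a
  have hRelLP : ∑ i, ∑ j, h i * r j * XLP i j = lam * a := by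
    rw [hXLP, comb_sum (fun i j => h i * r j) α Xp Xm]
    by_cases hlt : Rm < Rp
    · rw [hα, if_pos hlt]
      have hne : Rp - Rm ≠ 0 := by linarith
      field_simp
      ring
    · rw [hα, if_neg hlt]
      push_neg at hlt
      have : Rp = lam * a := le_antisymm (by linarith) hRelp
      simpa using this
  -- feasibility
  have hfeas : feasF XLP := by
    obtain ⟨hp1, hp2, hp3⟩ := hXpF
    obtain ⟨hm1, hm2, hm3⟩ := hXmF
    refine ⟨fun i j => ?_, fun i => ?_, fun j => ?_⟩
    · have := hp1 i j; have := hm1 i j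
      simp only [Set.mem_Icc] at *
      rw [hXLP]
      simp only [Matrix.add_apply, Matrix.smul_apply, smul_eq_mul]
      constructor
      · nlinarith [hp1 i j, hm1 i j]
      · nlinarith [hp1 i j, hm1 i j]
    · rw [hXLP]
      simp only [Matrix.add_apply, Matrix.smul_apply, smul_eq_mul]
      rw [Finset.sum_add_distrib, ← Finset.mul_sum, ← Finset.mul_sum]
      nlinarith [hp2 i, hm2 i, Finset.sum_nonneg (fun j (_ : j ∈ Finset.univ) => (hm1 i j).1),
        Finset.sum_nonneg (fun j (_ : j ∈ Finset.univ) => (hp1 i j).1)]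
    · rw [hXLP]
      simp only [Matrix.add_apply, Matrix.smul_apply, smul_eq_mul]
      rw [Finset.sum_add_distrib, ← Finset.mul_sum, ← Finset.mul_sum]
      nlinarith [hp3 j, hm3 j, Finset.sum_nonneg (fun i (_ : i ∈ Finset.univ) => (hm1 i j).1),
        Finset.sum_nonneg (fun i (_ : i ∈ Finset.univ) => (hp1 i j).1)]
  refine ⟨hfeas, le_of_eq hRelLP.symm, fun _ _ => hRelLP, fun X hXF hXRel => ?_⟩
  -- optimality
  have hLpm : ∑ i, ∑ j, h i * (v j + μs * r j) * Xp i j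
      = ∑ i, ∑ j, h i * (v j + μs * r j) * Xm i j :=
    le_antisymm (hXmmax Xp hXpF) (hXpmax Xm hXmF)
  have hLLP : ∑ i, ∑ j, h i * (v j + μs * r j) * XLP i j
      = ∑ i, ∑ j, h i * (v j + μs * r j) * Xp i j := by
    rw [hXLP, comb_sum (fun i j => h i * (v j + μs * r j)) α Xp Xm, hLpm]
    ring
  have hLX := hXpmax X hXF
  have h1 := lag_split h v r μs X
  have h2 := lag_split h v r μs XLP
  have h3 : μs * (lam * a) ≤ μs * (∑ i, ∑ j, h i * r j * X i j) :=
    mul_le_mul_of_nonneg_left hXRel hμs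
  rw [h1] at hLX
  have h4 : ∑ i, ∑ j, h i * v j * XLP i j
      = (∑ i, ∑ j, h i * (v j + μs * r j) * Xp i j) - μs * (lam * a) := by
    rw [← hLLP, h2, hRelLP]; ring
  linarith
end

section
/- Expected value under two-point randomization equals the LP optimum (Theorem 1, Case A): if μ* = 0, i.e., the relevance constraint is nonbinding so that the primal response X̂ to δ = v satisfies Rel(X̂) ≥ λa, then the randomized output X̃ of the production algorithm equals X̂ deterministically, and E[X̃] = X̂ is an optimal solution of the LP relaxation P1 with E[Rev(X̃)] = OPT_LP. -/
lemma tele19 (A : ℕ → ℝ) (m : ℕ) (hAm : A m = 0) :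
    ∀ i < m, A i = ∑ k ∈ Finset.Ico i m, (A k - A (k+1)) := by
  intro i hi
  have h1 : ∑ k ∈ Finset.Ico i m, (A k - A (k+1)) = A i - A m := by
    rw [Finset.sum_Ico_eq_sum_range]
    have h2 := Finset.sum_range_sub' (fun t => A (i + t)) (m - i)
    have h3 : i + (m - i) = m := by omega
    simpa [h3, add_assoc] using h2
  rw [h1, hAm, sub_zero]

lemma swapIco19 (m : ℕ) (F : ℕ → ℕ → ℝ) :
    ∑ i ∈ Finset.range m, ∑ k ∈ Finset.Ico i m, F i k
      = ∑ k ∈ Finset.range m, ∑ i ∈ Finset.range (k+1), F i k := by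
  have h1 : ∀ i : ℕ, Finset.Ico i m = (Finset.range m).filter (fun k => i ≤ k) := by
    intro i; ext k; simp [Finset.mem_filter]; omega
  calc ∑ i ∈ Finset.range m, ∑ k ∈ Finset.Ico i m, F i k
      = ∑ i ∈ Finset.range m, ∑ k ∈ Finset.range m, if i ≤ k then F i k else 0 := by
        refine Finset.sum_congr rfl fun i _ => ?_
        rw [h1 i, Finset.sum_filter]
    _ = ∑ k ∈ Finset.range m, ∑ i ∈ Finset.range m, if i ≤ k then F i k else 0 :=
        Finset.sum_comm
    _ = ∑ k ∈ Finset.range m, ∑ i ∈ Finset.range (k+1), F i k := by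
        refine Finset.sum_congr rfl fun k hk => ?_
        rw [Finset.mem_range] at hk
        rw [← Finset.sum_filter]
        refine Finset.sum_congr ?_ (fun _ _ => rfl)
        ext i; simp [Finset.mem_filter]; omega

lemma expand19 (m n : ℕ) (A B : ℕ → ℝ) (Y : ℕ → ℕ → ℝ)
    (hA : ∀ i < m, A i = ∑ k ∈ Finset.Ico i m, (A k - A (k+1)))
    (hB : ∀ j < n, B j = ∑ l ∈ Finset.Ico j n, (B l - B (l+1))) :
    ∑ i ∈ Finset.range m, ∑ j ∈ Finset.range n, A i * B j * Y i j
      = ∑ k ∈ Finset.range m, ∑ l ∈ Finset.range n,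
          (A k - A (k+1)) * (B l - B (l+1)) *
            ∑ i ∈ Finset.range (k+1), ∑ j ∈ Finset.range (l+1), Y i j := by
  calc ∑ i ∈ Finset.range m, ∑ j ∈ Finset.range n, A i * B j * Y i j
      = ∑ i ∈ Finset.range m, ∑ j ∈ Finset.range n, ∑ k ∈ Finset.Ico i m,
          ∑ l ∈ Finset.Ico j n, (A k - A (k+1)) * (B l - B (l+1)) * Y i j := by
        refine Finset.sum_congr rfl fun i hi => Finset.sum_congr rfl fun j hj => ?_
        rw [Finset.mem_range] at hi hj
        rw [hA i hi, hB j hj, Finset.sum_mul_sum, Finset.sum_mul]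
        exact Finset.sum_congr rfl fun k _ => Finset.sum_mul _ _ _
    _ = ∑ i ∈ Finset.range m, ∑ k ∈ Finset.Ico i m, ∑ j ∈ Finset.range n,
          ∑ l ∈ Finset.Ico j n, (A k - A (k+1)) * (B l - B (l+1)) * Y i j :=
        Finset.sum_congr rfl fun i _ => Finset.sum_comm
    _ = ∑ k ∈ Finset.range m, ∑ i ∈ Finset.range (k+1), ∑ j ∈ Finset.range n,
          ∑ l ∈ Finset.Ico j n, (A k - A (k+1)) * (B l - B (l+1)) * Y i j :=
        swapIco19 m _
    _ = ∑ k ∈ Finset.range m, ∑ i ∈ Finset.range (k+1), ∑ l ∈ Finset.range n,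
          ∑ j ∈ Finset.range (l+1), (A k - A (k+1)) * (B l - B (l+1)) * Y i j :=
        Finset.sum_congr rfl fun k _ => Finset.sum_congr rfl fun i _ => swapIco19 n _
    _ = ∑ k ∈ Finset.range m, ∑ l ∈ Finset.range n, ∑ i ∈ Finset.range (k+1),
          ∑ j ∈ Finset.range (l+1), (A k - A (k+1)) * (B l - B (l+1)) * Y i j :=
        Finset.sum_congr rfl fun k _ => Finset.sum_comm
    _ = _ := by
        refine Finset.sum_congr rfl fun k _ => Finset.sum_congr rfl fun l _ => ?_
        rw [Finset.mul_sum]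
        exact Finset.sum_congr rfl fun i _ => (Finset.mul_sum _ _ _).symm

lemma key19 (m n : ℕ) (hmn : m ≤ n) (A B : ℕ → ℝ)
    (hAd : ∀ k < m, A (k+1) ≤ A k) (hBd : ∀ l < n, B (l+1) ≤ B l)
    (hAm : A m = 0) (hBn : B n = 0)
    (Y : ℕ → ℕ → ℝ) (hY0 : ∀ i j, 0 ≤ Y i j)
    (hrow : ∀ i < m, ∑ j ∈ Finset.range n, Y i j ≤ 1)
    (hcol : ∀ j < n, ∑ i ∈ Finset.range m, Y i j ≤ 1) :
    ∑ i ∈ Finset.range m, ∑ j ∈ Finset.range n, A i * B j * Y i j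
      ≤ ∑ i ∈ Finset.range m, A i * B i := by
  have hA' := tele19 A m hAm
  have hB' := tele19 B n hBn
  have hRHS : ∑ i ∈ Finset.range m, A i * B i
      = ∑ i ∈ Finset.range m, ∑ j ∈ Finset.range n, A i * B j *
          (if i = j then (1:ℝ) else 0) := by
    refine Finset.sum_congr rfl fun i hi => ?_
    rw [Finset.mem_range] at hi
    simp only [mul_ite, mul_one, mul_zero]
    rw [Finset.sum_ite_eq]
    simp [hi.trans_le hmn]
  rw [hRHS, expand19 m n A B Y hA' hB',
    expand19 m n A B (fun i j => if i = j then (1:ℝ) else 0) hA' hB']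
  refine Finset.sum_le_sum fun k hk => Finset.sum_le_sum fun l hl => ?_
  rw [Finset.mem_range] at hk hl
  have hD : 0 ≤ A k - A (k+1) := sub_nonneg.2 (hAd k hk)
  have hE : 0 ≤ B l - B (l+1) := sub_nonneg.2 (hBd l hl)
  refine mul_le_mul_of_nonneg_left ?_ (mul_nonneg hD hE)
  have ehat : ∑ i ∈ Finset.range (k+1), ∑ j ∈ Finset.range (l+1),
      (if i = j then (1:ℝ) else 0) = ((min (k+1) (l+1) : ℕ) : ℝ) := by
    have e1 : ∀ i : ℕ, ∑ j ∈ Finset.range (l+1), (if i = j then (1:ℝ) else 0)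
        = if i ∈ Finset.range (l+1) then (1:ℝ) else 0 := fun i =>
      Finset.sum_ite_eq (Finset.range (l+1)) i (fun _ => (1:ℝ))
    simp only [e1]
    rw [Finset.sum_ite_mem]
    have : Finset.range (k+1) ∩ Finset.range (l+1) = Finset.range (min (k+1) (l+1)) := by
      ext t
      simp only [Finset.mem_inter, Finset.mem_range]
      omega
    rw [this]
    simp
  rw [ehat]
  have hb1 : ∑ i ∈ Finset.range (k+1), ∑ j ∈ Finset.range (l+1), Y i j ≤ (k+1 : ℝ) := by
    have : ∀ i ∈ Finset.range (k+1), ∑ j ∈ Finset.range (l+1), Y i j ≤ 1 := by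
      intro i hi
      rw [Finset.mem_range] at hi
      calc ∑ j ∈ Finset.range (l+1), Y i j ≤ ∑ j ∈ Finset.range n, Y i j :=
            Finset.sum_le_sum_of_subset_of_nonneg
              (Finset.range_subset_range.2 (by omega)) (fun j _ _ => hY0 i j)
        _ ≤ 1 := hrow i (by omega)
    calc ∑ i ∈ Finset.range (k+1), ∑ j ∈ Finset.range (l+1), Y i j
        ≤ ∑ _i ∈ Finset.range (k+1), (1:ℝ) := Finset.sum_le_sum this
      _ = (k+1 : ℝ) := by simp
  have hb2 : ∑ i ∈ Finset.range (k+1), ∑ j ∈ Finset.range (l+1), Y i j ≤ (l+1 : ℝ) := by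
    rw [Finset.sum_comm]
    have : ∀ j ∈ Finset.range (l+1), ∑ i ∈ Finset.range (k+1), Y i j ≤ 1 := by
      intro j hj
      rw [Finset.mem_range] at hj
      calc ∑ i ∈ Finset.range (k+1), Y i j ≤ ∑ i ∈ Finset.range m, Y i j :=
            Finset.sum_le_sum_of_subset_of_nonneg
              (Finset.range_subset_range.2 (by omega)) (fun i _ _ => hY0 i j)
        _ ≤ 1 := hcol j (by omega)
    calc ∑ j ∈ Finset.range (l+1), ∑ i ∈ Finset.range (k+1), Y i j
        ≤ ∑ _j ∈ Finset.range (l+1), (1:ℝ) := Finset.sum_le_sum this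
      _ = (l+1 : ℝ) := by simp
  have : ((min (k+1) (l+1) : ℕ) : ℝ) = min ((k:ℝ)+1) ((l:ℝ)+1) := by push_cast; simp
  rw [this]
  exact le_min hb1 hb2


lemma conv19 (p : ℕ) (F : Fin p → ℝ) :
    ∑ i : Fin p, F i = ∑ t ∈ Finset.range p, (fun t => if ht : t < p then F ⟨t, ht⟩ else 0) t := by
  rw [← Fin.sum_univ_eq_sum_range]
  refine Finset.sum_congr rfl fun i _ => ?_
  simp

lemma finkey19 {m n : ℕ} (hmn : m ≤ n) (h : Fin m → ℝ) (w : Fin n → ℝ)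
    (hdesc : Antitone h) (hnonneg : ∀ i, 0 ≤ h i)
    (hw : ∀ j, 0 ≤ w j) (hwdesc : Antitone w)
    (Z : Fin m → Fin n → ℝ) (hZ0 : ∀ i j, 0 ≤ Z i j)
    (hzrow : ∀ i, ∑ j, Z i j ≤ 1) (hzcol : ∀ j, ∑ i, Z i j ≤ 1) :
    ∑ i, ∑ j, h i * w j * Z i j ≤ ∑ i : Fin m, h i * w (Fin.castLE hmn i) := by
  set A : ℕ → ℝ := fun t => if ht : t < m then h ⟨t, ht⟩ else 0 with hAdef
  set B : ℕ → ℝ := fun t => if ht : t < n then w ⟨t, ht⟩ else 0 with hBdef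
  set Y : ℕ → ℕ → ℝ := fun i j =>
    if hi : i < m then (if hj : j < n then Z ⟨i, hi⟩ ⟨j, hj⟩ else 0) else 0 with hYdef
  have hAm : A m = 0 := by simp [hAdef]
  have hBn : B n = 0 := by simp [hBdef]
  have hAd : ∀ k < m, A (k+1) ≤ A k := by
    intro k hk
    by_cases h2 : k + 1 < m
    · simp only [hAdef]
      rw [dif_pos hk, dif_pos h2]
      exact hdesc (by simp [Fin.mk_le_mk])
    · simp only [hAdef]
      rw [dif_pos hk, dif_neg h2]
      exact hnonneg _
  have hBd : ∀ l < n, B (l+1) ≤ B l := by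
    intro l hl
    by_cases h2 : l + 1 < n
    · simp only [hBdef]
      rw [dif_pos hl, dif_pos h2]
      exact hwdesc (by simp [Fin.mk_le_mk])
    · simp only [hBdef]
      rw [dif_pos hl, dif_neg h2]
      exact hw _
  have hY0 : ∀ i j, 0 ≤ Y i j := by
    intro i j
    by_cases hi : i < m <;> by_cases hj : j < n <;> simp [hYdef, hi, hj, hZ0]
  have hrowY : ∀ i < m, ∑ j ∈ Finset.range n, Y i j ≤ 1 := by
    intro i hi
    have e : ∑ j ∈ Finset.range n, Y i j = ∑ j : Fin n, Z ⟨i, hi⟩ j := by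
      rw [conv19 n (fun j => Z ⟨i, hi⟩ j)]
      refine Finset.sum_congr rfl fun tj htj => ?_
      rw [Finset.mem_range] at htj
      simp [hYdef, hi, htj]
    rw [e]; exact hzrow _
  have hcolY : ∀ j < n, ∑ i ∈ Finset.range m, Y i j ≤ 1 := by
    intro j hj
    have e : ∑ i ∈ Finset.range m, Y i j = ∑ i : Fin m, Z i ⟨j, hj⟩ := by
      rw [conv19 m (fun i => Z i ⟨j, hj⟩)]
      refine Finset.sum_congr rfl fun ti hti => ?_
      rw [Finset.mem_range] at hti
      simp [hYdef, hti, hj]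
    rw [e]; exact hzcol _
  have e1 : ∑ i : Fin m, ∑ j : Fin n, h i * w j * Z i j
      = ∑ ti ∈ Finset.range m, ∑ tj ∈ Finset.range n, A ti * B tj * Y ti tj := by
    rw [conv19 m (fun i => ∑ j, h i * w j * Z i j)]
    refine Finset.sum_congr rfl fun ti hti => ?_
    rw [Finset.mem_range] at hti
    dsimp only
    rw [dif_pos hti, conv19 n (fun j => h ⟨ti, hti⟩ * w j * Z ⟨ti, hti⟩ j)]
    refine Finset.sum_congr rfl fun tj htj => ?_
    rw [Finset.mem_range] at htj
    simp [hAdef, hBdef, hYdef, hti, htj]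
  have e2 : ∑ i : Fin m, h i * w (Fin.castLE hmn i) = ∑ t ∈ Finset.range m, A t * B t := by
    rw [conv19 m (fun i => h i * w (Fin.castLE hmn i))]
    refine Finset.sum_congr rfl fun t ht => ?_
    rw [Finset.mem_range] at ht
    dsimp only
    rw [dif_pos ht]
    simp [hAdef, hBdef, ht, ht.trans_le hmn, Fin.castLE]
  rw [e1, e2]
  exact key19 m n hmn A B hAd hBd hAm hBn Y hY0 hrowY hcolY

/-- Theorem 1, Case A: if the relevance constraint is nonbinding, i.e., the
greedy primal response `X̂` to `δ = v` already satisfies `Rel(X̂) ≥ λa`, then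
the (deterministic) output `X̂` is an optimal solution of the LP relaxation
`P1`, with revenue equal to `OPT_LP`. -/
theorem stmt19 {m n : ℕ} (hm : 0 < m) (hmn : m ≤ n)
    (h : Fin m → ℝ) (v r : Fin n → ℝ)
    (hdesc : Antitone h) (hnonneg : ∀ i, 0 ≤ h i)
    (hv : ∀ j, 0 ≤ v j) (hr : ∀ j, 0 ≤ r j)
    (lam a : ℝ) (hlam : lam ∈ Set.Icc (0:ℝ) 1)
    (σ : Equiv.Perm (Fin n)) (hσ : Antitone fun j => v (σ j))
    (Xhat : Matrix (Fin m) (Fin n) ℝ)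
    (hXhat : Xhat = fun i j => if j = σ (Fin.castLE hmn i) then (1:ℝ) else 0)
    (hrel : lam * a ≤ ∑ i, ∑ j, h i * r j * Xhat i j) :
    feasF Xhat ∧
    IsGreatest {y | ∃ X, feasF X ∧ lam * a ≤ ∑ i, ∑ j, h i * r j * X i j ∧
      y = ∑ i, ∑ j, h i * v j * X i j} (∑ i, ∑ j, h i * v j * Xhat i j) := by
  have hfeas : feasF Xhat := by
    refine ⟨fun i j => ?_, fun i => ?_, fun j => ?_⟩
    · rw [hXhat]; dsimp only; split <;> simp [Set.mem_Icc]
    · rw [hXhat]; dsimp only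
      rw [Finset.sum_ite_eq' Finset.univ (σ (Fin.castLE hmn i)) (fun _ => (1:ℝ))]
      simp
    · rw [hXhat]; dsimp only
      by_cases ht : ((σ.symm j : Fin n) : ℕ) < m
      · have hiff : ∀ i : Fin m,
            (j = σ (Fin.castLE hmn i)) ↔ i = ⟨((σ.symm j : Fin n) : ℕ), ht⟩ := by
          intro i
          constructor
          · intro H
            have h2 : σ.symm j = Fin.castLE hmn i := by rw [H]; simp
            apply Fin.ext
            have h3 := congrArg Fin.val h2
            simpa using h3.symm
          · intro H
            subst H
            have h4 : Fin.castLE hmn (⟨((σ.symm j : Fin n) : ℕ), ht⟩ : Fin m) = σ.symm j := by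
              apply Fin.ext; simp [Fin.castLE]
            rw [h4]; simp
        calc ∑ i : Fin m, (if j = σ (Fin.castLE hmn i) then (1:ℝ) else 0)
            = ∑ i : Fin m, (if i = ⟨((σ.symm j : Fin n) : ℕ), ht⟩ then (1:ℝ) else 0) :=
              Finset.sum_congr rfl fun i _ => if_congr (hiff i) rfl rfl
          _ ≤ 1 := by
              rw [Finset.sum_ite_eq' Finset.univ _ (fun _ => (1:ℝ))]
              simp
      · have hno : ∀ i : Fin m, ¬ (j = σ (Fin.castLE hmn i)) := by
          intro i H
          apply ht
          have h2 : σ.symm j = Fin.castLE hmn i := by rw [H]; simp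
          rw [h2]; exact i.isLt
        rw [Finset.sum_eq_zero (fun i _ => if_neg (hno i))]
        norm_num
  refine ⟨hfeas, ⟨Xhat, hfeas, hrel, rfl⟩, ?_⟩
  rintro y ⟨X, ⟨hX01, hXrow, hXcol⟩, -, rfl⟩
  have hXhatval : ∑ i, ∑ j, h i * v j * Xhat i j
      = ∑ i : Fin m, h i * v (σ (Fin.castLE hmn i)) := by
    rw [hXhat]
    refine Finset.sum_congr rfl fun i _ => ?_
    dsimp only
    simp only [mul_ite, mul_one, mul_zero]
    rw [Finset.sum_ite_eq' Finset.univ (σ (Fin.castLE hmn i))]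
    simp
  have hXval : ∑ i, ∑ j, h i * v j * X i j
      = ∑ i, ∑ j, h i * v (σ j) * X i (σ j) :=
    Finset.sum_congr rfl fun i _ => (Equiv.sum_comp σ (fun j => h i * v j * X i j)).symm
  have hrowZ : ∀ i, ∑ j, X i (σ j) ≤ 1 := by
    intro i
    rw [Equiv.sum_comp σ (fun j => X i j)]
    exact hXrow i
  have key := finkey19 hmn h (fun j => v (σ j)) hdesc hnonneg (fun j => hv _) hσ
    (fun i j => X i (σ j)) (fun i j => (hX01 i (σ j)).1) hrowZ (fun j => hXcol (σ j))
  rw [hXhatval, hXval]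
  exact key
end
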